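/- arXiv:2510.11939 — 3 statements merged into one kernel-verified Lean document; each statement's English description precedes it below -/
import Mathlib

section
/- Let I ⊆ ℝ be an open interval and let λ, μ, r ∈ ℝ. Let B, C, ξ, h : I → ℝ be differentiable functions with h nonvanishing, and suppose that on all of I: (i) ξ = h'/h, (ii) ξ' = -ξ² + C - λ, and (iii) ξ² - B·ξ - C = -(r-1)·μ/h². Then B·ξ² + (B' + 2λ)·ξ + (C - λ)·B + C' = 0 on I. -/
/-! Differentiating (iii) gives `(ξ² - Bξ - C)' = -2ξ (ξ² - Bξ - C)`, since the right-hand side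
of (iii) has logarithmic derivative `-2h'/h = -2ξ`; eliminating `ξ'` by the Riccati equation (ii)
leaves exactly the claimed quadratic relation. -/

open Filter Topology

theorem HasDerivAt.const_div_sq {h : ℝ → ℝ} {h' s : ℝ} (c : ℝ) (hh : HasDerivAt h h' s)
    (hs : h s ≠ 0) :
    HasDerivAt (fun t => c / h t ^ 2) (-2 * (h' / h s) * (c / h s ^ 2)) s := by
  refine ((hasDerivAt_const s c).div (hh.pow 2) (pow_ne_zero 2 hs)).congr_deriv ?_
  simp only [Pi.pow_apply]
  field_simp
  ring

/-- Let `I = (a, b) ⊆ ℝ` be an open interval and `λ, μ, r ∈ ℝ`.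
Let `B, C, ξ, h : I → ℝ` be differentiable functions (with derivatives `B', C', ξ', h'`)
with `h` nonvanishing, and suppose that on all of `I`:
(i) `ξ = h'/h`, (ii) `ξ' = -ξ² + C - λ`, and (iii) `ξ² - B·ξ - C = -(r-1)·μ/h²`.
Then `B·ξ² + (B' + 2λ)·ξ + (C - λ)·B + C' = 0` on `I`. -/
theorem stmt_2 (a b lam μ r : ℝ) (B B' C C' ξ ξ' h h' : ℝ → ℝ)
    (hBdiff : ∀ s ∈ Set.Ioo a b, HasDerivAt B (B' s) s)
    (hCdiff : ∀ s ∈ Set.Ioo a b, HasDerivAt C (C' s) s)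
    (hξdiff : ∀ s ∈ Set.Ioo a b, HasDerivAt ξ (ξ' s) s)
    (hhdiff : ∀ s ∈ Set.Ioo a b, HasDerivAt h (h' s) s)
    (hh : ∀ s ∈ Set.Ioo a b, h s ≠ 0)
    (e1 : ∀ s ∈ Set.Ioo a b, ξ s = h' s / h s)
    (e2 : ∀ s ∈ Set.Ioo a b, ξ' s = -(ξ s) ^ 2 + C s - lam)
    (e3 : ∀ s ∈ Set.Ioo a b,
      (ξ s) ^ 2 - B s * ξ s - C s = -(r - 1) * μ / (h s) ^ 2) :
    ∀ s ∈ Set.Ioo a b,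
      B s * (ξ s) ^ 2 + (B' s + 2 * lam) * ξ s + (C s - lam) * B s + C' s = 0 := by
  intro s hs
  have hlhs : HasDerivAt (fun t => ξ t ^ 2 - B t * ξ t - C t)
      (2 * ξ s ^ 1 * ξ' s - (B' s * ξ s + B s * ξ' s) - C' s) s :=
    (((hξdiff s hs).pow 2).sub ((hBdiff s hs).mul (hξdiff s hs))).sub (hCdiff s hs)
  have hrhs := (hhdiff s hs).const_div_sq (-(r - 1) * μ) (hh s hs)
  have heq : (fun t => ξ t ^ 2 - B t * ξ t - C t) =ᶠ[𝓝 s] fun t => -(r - 1) * μ / h t ^ 2 :=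
    eventually_of_mem (isOpen_Ioo.mem_nhds hs) e3
  have hderiv := hlhs.unique (heq.hasDerivAt_iff.mpr hrhs)
  rw [← e1 s hs, ← e3 s hs, e2 s hs] at hderiv
  linear_combination -hderiv
end

section
/- Let I ⊆ ℝ be an open interval, let n ≥ 2 be an integer, let c₀ ∈ ℝ, let k ≥ 1 and let r₁, …, r_k be positive reals with r₁ + ⋯ + r_k = n - 1. Let φ, ξ₁, …, ξ_k : I → ℝ be differentiable functions satisfying φ' = (n-1)c₀ and ξ_ℓ' = -ξ_ℓ² + c₀ on I for every ℓ ∈ {1,…,k}. Define R := -(n-1)c₀ - φ·Σ_{ℓ=1}^{k} r_ℓ ξ_ℓ and S := (n-1)²c₀² + φ²·Σ_{ℓ=1}^{k} r_ℓ ξ_ℓ². Then R is differentiable and S = (n-1)c₀·φ² - (n-1)c₀·R + φ·R' on I. -/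
/-! Differentiating `R = -(n-1)c₀ - φ Σ r_ℓ ξ_ℓ` and inserting `φ' = (n-1)c₀`, the Riccati
equations `ξ_ℓ' = c₀ - ξ_ℓ²` and `Σ r_ℓ = n - 1` gives
`φ R' = -(n-1)c₀ φ Σ r_ℓ ξ_ℓ + φ² Σ r_ℓ ξ_ℓ² - (n-1)c₀ φ²`; the `φ Σ r_ℓ ξ_ℓ` term is
`-(n-1)c₀ - R`, and what remains rearranges to `S`. -/

open Finset

theorem sum_mul_neg_sq_add {ι : Type*} (s : Finset ι) (r x : ι → ℝ) (c : ℝ) :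
    ∑ i ∈ s, r i * (-(x i) ^ 2 + c) = -∑ i ∈ s, r i * x i ^ 2 + (∑ i ∈ s, r i) * c := by
  rw [sum_mul, ← sum_neg_distrib, ← sum_add_distrib]
  exact sum_congr rfl fun i _ => by ring

theorem hasDerivAt_sum_mul_of_riccati {ι : Type*} [Fintype ι] (r : ι → ℝ) (ξ : ι → ℝ → ℝ)
    (c s : ℝ) (hξ : ∀ i, HasDerivAt (ξ i) (-(ξ i s) ^ 2 + c) s) :
    HasDerivAt (fun t => ∑ i, r i * ξ i t) (-∑ i, r i * ξ i s ^ 2 + (∑ i, r i) * c) s := by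
  rw [← sum_mul_neg_sq_add]
  exact HasDerivAt.fun_sum fun i _ => (hξ i).const_mul (r i)

theorem stmt_3_general (a b : ℝ) (n : ℕ) (c₀ : ℝ) (k : ℕ)
    (r : Fin k → ℝ) (hrsum : ∑ ℓ, r ℓ = (n : ℝ) - 1)
    (φ : ℝ → ℝ) (ξ : Fin k → ℝ → ℝ)
    (hφ : ∀ s ∈ Set.Ioo a b, HasDerivAt φ (((n : ℝ) - 1) * c₀) s)
    (hξ : ∀ ℓ, ∀ s ∈ Set.Ioo a b, HasDerivAt (ξ ℓ) (-(ξ ℓ s) ^ 2 + c₀) s)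
    (R S : ℝ → ℝ)
    (hR : ∀ s, R s = -((n : ℝ) - 1) * c₀ - φ s * ∑ ℓ, r ℓ * ξ ℓ s)
    (hS : ∀ s, S s = ((n : ℝ) - 1) ^ 2 * c₀ ^ 2 + (φ s) ^ 2 * ∑ ℓ, r ℓ * (ξ ℓ s) ^ 2) :
    ∀ s ∈ Set.Ioo a b, DifferentiableAt ℝ R s ∧
      S s = ((n : ℝ) - 1) * c₀ * (φ s) ^ 2 - ((n : ℝ) - 1) * c₀ * R s + φ s * deriv R s := by
  intro s hs
  have hsum := hasDerivAt_sum_mul_of_riccati r ξ c₀ s fun ℓ => hξ ℓ s hs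
  rw [hrsum] at hsum
  have hRderiv : HasDerivAt R (-(((n : ℝ) - 1) * c₀ * ∑ ℓ, r ℓ * ξ ℓ s
      + φ s * (-∑ ℓ, r ℓ * ξ ℓ s ^ 2 + ((n : ℝ) - 1) * c₀))) s := by
    rw [funext hR]
    exact ((hφ s hs).mul hsum).const_sub _
  refine ⟨hRderiv.differentiableAt, ?_⟩
  rw [hRderiv.deriv, hS, hR]
  ring

/-- Let `I = (a, b) ⊆ ℝ` be an open interval, `n ≥ 2` an integer, `c₀ ∈ ℝ`, `k ≥ 1`,
and `r₁, …, r_k` positive reals with `r₁ + ⋯ + r_k = n - 1`.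
Let `φ, ξ₁, …, ξ_k : I → ℝ` be differentiable functions satisfying `φ' = (n-1)c₀` and
`ξ_ℓ' = -ξ_ℓ² + c₀` on `I` for every `ℓ`.
Define `R := -(n-1)c₀ - φ·Σ_ℓ r_ℓ ξ_ℓ` and `S := (n-1)²c₀² + φ²·Σ_ℓ r_ℓ ξ_ℓ²`.
Then `R` is differentiable and `S = (n-1)c₀·φ² - (n-1)c₀·R + φ·R'` on `I`. -/
theorem stmt_3 (a b : ℝ) (n : ℕ) (hn : 2 ≤ n) (c₀ : ℝ) (k : ℕ) (hk : 1 ≤ k)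
    (r : Fin k → ℝ) (hr : ∀ ℓ, 0 < r ℓ) (hrsum : ∑ ℓ, r ℓ = (n : ℝ) - 1)
    (φ : ℝ → ℝ) (ξ : Fin k → ℝ → ℝ)
    (hφ : ∀ s ∈ Set.Ioo a b, HasDerivAt φ (((n : ℝ) - 1) * c₀) s)
    (hξ : ∀ ℓ, ∀ s ∈ Set.Ioo a b, HasDerivAt (ξ ℓ) (-(ξ ℓ s) ^ 2 + c₀) s)
    (R S : ℝ → ℝ)
    (hR : ∀ s, R s = -((n : ℝ) - 1) * c₀ - φ s * ∑ ℓ, r ℓ * ξ ℓ s)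
    (hS : ∀ s, S s = ((n : ℝ) - 1) ^ 2 * c₀ ^ 2 + (φ s) ^ 2 * ∑ ℓ, r ℓ * (ξ ℓ s) ^ 2) :
    ∀ s ∈ Set.Ioo a b, DifferentiableAt ℝ R s ∧
      S s = ((n : ℝ) - 1) * c₀ * (φ s) ^ 2 - ((n : ℝ) - 1) * c₀ * R s + φ s * deriv R s :=
  stmt_3_general a b n c₀ k r hrsum φ ξ hφ hξ R S hR hS
end

section
/- Let I ⊆ ℝ be an open interval, let n ≥ 2 be an integer and c₀ ∈ ℝ. Let φ, R : I → ℝ be differentiable functions satisfying on all of I: (i) φ' = (n-1)c₀, (ii) R' = -2(n-1)c₀·φ, and (iii) 4(n-1)c₀·R - 2(n-1)c₀·φ² - φ·R' + 4(n-1)²c₀² = 0. If φ(s₁) ≠ 0 for some s₁ ∈ I, then c₀ = 0. -/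
/-!
Substituting (ii) into (iii) cancels the `φ²` terms and leaves `4k(R + k) = 0` with `k = (n-1)c₀`.
If `c₀ ≠ 0` then `k ≠ 0`, so `R ≡ -k` on `I`; hence `R' ≡ 0` there, and (ii) forces `φ ≡ 0`,
contradicting `φ(s₁) ≠ 0`.
-/

open Set

theorem HasDerivAt.eq_zero_of_eqOn_const {𝕜 F : Type*} [NontriviallyNormedField 𝕜]
    [NormedAddCommGroup F] [NormedSpace 𝕜 F] {f : 𝕜 → F} {f' c : F} {U : Set 𝕜} {x : 𝕜}
    (hf : HasDerivAt f f' x) (hU : IsOpen U) (hx : x ∈ U) (hfc : EqOn f (fun _ => c) U) :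
    f' = 0 :=
  hf.unique <| (hasDerivAt_const x c).congr_of_eventuallyEq <|
    Filter.eventuallyEq_of_mem (hU.mem_nhds hx) hfc

theorem eq_neg_of_combined_identity {k r r' φ : ℝ} (hk : k ≠ 0)
    (hr' : r' = -2 * k * φ) (h : 4 * k * r - 2 * k * φ ^ 2 - φ * r' + 4 * k ^ 2 = 0) :
    r = -k := by
  have hprod : (4 * k) * (r + k) = 0 := by
    rw [hr'] at h
    linear_combination h
  have := (mul_eq_zero.mp hprod).resolve_left (mul_ne_zero four_ne_zero hk)
  linarith

theorem stmt_5_general (a b : ℝ) (n : ℕ) (hn : 2 ≤ n) (c₀ : ℝ)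
    (φ R R' : ℝ → ℝ)
    (hRdiff : ∀ s ∈ Set.Ioo a b, HasDerivAt R (R' s) s)
    (h2 : ∀ s ∈ Set.Ioo a b, R' s = -2 * ((n : ℝ) - 1) * c₀ * φ s)
    (h3 : ∀ s ∈ Set.Ioo a b,
      4 * ((n : ℝ) - 1) * c₀ * R s - 2 * ((n : ℝ) - 1) * c₀ * (φ s) ^ 2
        - φ s * R' s + 4 * ((n : ℝ) - 1) ^ 2 * c₀ ^ 2 = 0)
    (s₁ : ℝ) (hs₁ : s₁ ∈ Set.Ioo a b) (hφs₁ : φ s₁ ≠ 0) :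
    c₀ = 0 := by
  by_contra hc₀
  have hn1 : (n : ℝ) - 1 ≠ 0 := by
    have : (2 : ℝ) ≤ n := by exact_mod_cast hn
    linarith
  have hk : ((n : ℝ) - 1) * c₀ ≠ 0 := mul_ne_zero hn1 hc₀
  have hR : EqOn R (fun _ => -(((n : ℝ) - 1) * c₀)) (Ioo a b) := fun s hs =>
    eq_neg_of_combined_identity (r' := R' s) (φ := φ s) hk (by rw [h2 s hs]; ring)
      (by linear_combination h3 s hs)
  have hR'₁ : R' s₁ = 0 := (hRdiff s₁ hs₁).eq_zero_of_eqOn_const isOpen_Ioo hs₁ hR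
  have hkφ : (-2 * (((n : ℝ) - 1) * c₀)) * φ s₁ = 0 := by
    linear_combination hR'₁ - h2 s₁ hs₁
  exact hφs₁ ((mul_eq_zero.mp hkφ).resolve_left (mul_ne_zero (by norm_num) hk))

/-- Let `I = (a, b) ⊆ ℝ` be an open interval, `n ≥ 2` an integer and `c₀ ∈ ℝ`.
Let `φ, R : I → ℝ` be differentiable functions satisfying on all of `I`:
(i) `φ' = (n-1)c₀`, (ii) `R' = -2(n-1)c₀·φ`, and
(iii) `4(n-1)c₀·R - 2(n-1)c₀·φ² - φ·R' + 4(n-1)²c₀² = 0`.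
If `φ(s₁) ≠ 0` for some `s₁ ∈ I`, then `c₀ = 0`. -/
theorem stmt_5 (a b : ℝ) (n : ℕ) (hn : 2 ≤ n) (c₀ : ℝ)
    (φ R R' : ℝ → ℝ)
    (hφdiff : ∀ s ∈ Set.Ioo a b, HasDerivAt φ (((n : ℝ) - 1) * c₀) s)
    (hRdiff : ∀ s ∈ Set.Ioo a b, HasDerivAt R (R' s) s)
    (h2 : ∀ s ∈ Set.Ioo a b, R' s = -2 * ((n : ℝ) - 1) * c₀ * φ s)
    (h3 : ∀ s ∈ Set.Ioo a b,
      4 * ((n : ℝ) - 1) * c₀ * R s - 2 * ((n : ℝ) - 1) * c₀ * (φ s) ^ 2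
        - φ s * R' s + 4 * ((n : ℝ) - 1) ^ 2 * c₀ ^ 2 = 0)
    (s₁ : ℝ) (hs₁ : s₁ ∈ Set.Ioo a b) (hφs₁ : φ s₁ ≠ 0) :
    c₀ = 0 :=
  stmt_5_general a b n hn c₀ φ R R' hRdiff h2 h3 s₁ hs₁ hφs₁
end
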